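/- Let R be a commutative Noetherian ring. Then the natural map R → lim_{p ∈ Spec R} R_p (inverse limit over the poset of primes with localization transition maps R_p → R_q for q ⊆ p) is a ring isomorphism. -/

import Mathlib

variable {R : Type*} [CommRing R]

/-- The canonical localization ring homomorphism `R_p → R_q` for primes `q ⊆ p`. -/
noncomputable def ringSpecMap (p q : PrimeSpectrum R) (h : q.asIdeal ≤ p.asIdeal) :
    Localization p.asIdeal.primeCompl →+* Localization q.asIdeal.primeCompl :=
  IsLocalization.map (M := p.asIdeal.primeCompl) (T := q.asIdeal.primeCompl)
    (Localization q.asIdeal.primeCompl) (RingHom.id R)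
    (fun _ hx => Submonoid.mem_comap.mpr (fun hq => hx (h hq)))

lemma ringSpecMap_algebraMap (p q : PrimeSpectrum R) (h : q.asIdeal ≤ p.asIdeal) (r : R) :
    ringSpecMap p q h (algebraMap R (Localization p.asIdeal.primeCompl) r)
      = algebraMap R (Localization q.asIdeal.primeCompl) r := by
  simp [ringSpecMap, IsLocalization.map_eq]

lemma loc_mk'_eq_zero_iff (p : PrimeSpectrum R) (x : R) (s : p.asIdeal.primeCompl) :
    (IsLocalization.mk' (Localization p.asIdeal.primeCompl) x s = 0)
      ↔ algebraMap R (Localization p.asIdeal.primeCompl) x = 0 := by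
  rw [IsLocalization.mk'_eq_zero_iff,
    IsLocalization.map_eq_zero_iff p.asIdeal.primeCompl]

lemma ringSpecMap_mk' (p q : PrimeSpectrum R) (h : q.asIdeal ≤ p.asIdeal) (x : R)
    (s : p.asIdeal.primeCompl) :
    ringSpecMap p q h (IsLocalization.mk' (Localization p.asIdeal.primeCompl) x s)
      = IsLocalization.mk' (Localization q.asIdeal.primeCompl) x
          (⟨s.1, fun hs => s.2 (h hs)⟩ : q.asIdeal.primeCompl) := by
  rw [ringSpecMap, IsLocalization.map_mk']
  rfl

/-- If `x` does not vanish in `R_q` then some primary component `J` of `0` with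
`rad J ⊆ q` fails to contain `x`. -/
lemma detect_primary (s : Finset (Ideal R)) (hinf : s.inf id = ⊥)
    (hprim : ∀ J ∈ s, J.IsPrimary) (q : PrimeSpectrum R) (x : R)
    (hx : algebraMap R (Localization q.asIdeal.primeCompl) x ≠ 0) :
    ∃ J ∈ s, J.radical ≤ q.asIdeal ∧ x ∉ J := by
  classical
  by_contra hcon
  push_neg at hcon
  apply hx
  rw [IsLocalization.map_eq_zero_iff q.asIdeal.primeCompl]
  have hchoice : ∀ J : {J // J ∈ s}, ∃ e : R,
      (¬ J.1.radical ≤ q.asIdeal → e ∈ J.1) ∧ e ∉ q.asIdeal := by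
    rintro ⟨J, hJ⟩
    by_cases hle : J.radical ≤ q.asIdeal
    · exact ⟨1, fun h => absurd hle h, fun h1 => q.isPrime.ne_top (Ideal.eq_top_iff_one _ |>.2 h1)⟩
    · obtain ⟨u, huJ, huq⟩ := SetLike.not_le_iff_exists.mp hle
      obtain ⟨n, hn⟩ := huJ
      exact ⟨u ^ n, fun _ => hn, fun h => huq (q.isPrime.mem_of_pow_mem n h)⟩
  choose e he1 he2 using hchoice
  refine ⟨⟨∏ J ∈ s.attach, e J, Submonoid.prod_mem _ (fun J _ => he2 J)⟩, ?_⟩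
  have : (∏ J ∈ s.attach, e J) * x ∈ (⊥ : Ideal R) := by
    rw [← hinf]
    rw [Submodule.mem_finsetInf]
    intro J hJ
    show _ ∈ J
    by_cases hle : J.radical ≤ q.asIdeal
    · exact Ideal.mul_mem_left _ _ (hcon J hJ hle)
    · refine Ideal.mul_mem_right _ _ ?_
      have := Finset.mul_prod_erase s.attach e (Finset.mem_attach s ⟨J, hJ⟩)
      rw [← this]
      exact Ideal.mul_mem_right _ _ (he1 ⟨J, hJ⟩ hle)
  simpa using this

/-- Nonvanishing at the radical of a primary ideal not containing `x`. -/
lemma nonzero_at_radical {J : Ideal R} (hJ : J.IsPrimary) (p : PrimeSpectrum R)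
    (hp : p.asIdeal = J.radical) {x : R} (hx : x ∉ J) :
    algebraMap R (Localization p.asIdeal.primeCompl) x ≠ 0 := by
  rw [Ne, IsLocalization.map_eq_zero_iff p.asIdeal.primeCompl]
  rintro ⟨⟨v, hv⟩, hvx⟩
  have hxv : x * v ∈ J := by
    rw [mul_comm, hvx]; exact J.zero_mem
  rcases (Ideal.isPrimary_iff.mp hJ).2 hxv with h | h
  · exact hx h
  · exact hv (hp ▸ h)
/-- The subring of `∏_p R_p` of families compatible with localization, i.e. the inverse
limit `lim_{p ∈ Spec R} R_p` over the specialization order. -/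
noncomputable def ringCompatibleFamilies (R : Type*) [CommRing R] :
    Subring (∀ p : PrimeSpectrum R, Localization p.asIdeal.primeCompl) where
  carrier := {σ | ∀ (p q : PrimeSpectrum R) (h : q.asIdeal ≤ p.asIdeal),
    ringSpecMap p q h (σ p) = σ q}
  add_mem' {a b} ha hb p q h := by simp [map_add, ha p q h, hb p q h]
  zero_mem' p q h := by simp
  one_mem' p q h := by simp
  mul_mem' {a b} ha hb p q h := by simp [map_mul, ha p q h, hb p q h]
  neg_mem' {a} ha p q h := by simp [map_neg, ha p q h]

/-- The natural ring homomorphism `R → lim_{p ∈ Spec R} R_p`. -/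
noncomputable def toRingCompatibleFamilies (R : Type*) [CommRing R] :
    R →+* ringCompatibleFamilies R :=
  (Pi.ringHom (fun p : PrimeSpectrum R => algebraMap R (Localization p.asIdeal.primeCompl))).codRestrict
    (ringCompatibleFamilies R) (fun r p q h => ringSpecMap_algebraMap p q h r)

section Family


variable (σ : ∀ p : PrimeSpectrum R, Localization p.asIdeal.primeCompl)
  (hσ : ∀ (p q : PrimeSpectrum R) (h : q.asIdeal ≤ p.asIdeal), ringSpecMap p q h (σ p) = σ q)

include hσ

/-- If a compatible family is nonzero at `q`, it is nonzero at the radical of some primary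
component of `0` contained in `q`. -/
lemma family_detect (s : Finset (Ideal R)) (hinf : s.inf id = ⊥)
    (hprim : ∀ J ∈ s, J.IsPrimary) (q : PrimeSpectrum R) (hq : σ q ≠ 0) :
    ∃ (p : PrimeSpectrum R) (J : Ideal R), J ∈ s ∧ p.asIdeal = J.radical ∧
      p.asIdeal ≤ q.asIdeal ∧ σ p ≠ 0 := by
  obtain ⟨x, t, hxt⟩ := IsLocalization.exists_mk'_eq q.asIdeal.primeCompl (σ q)
  have hx : algebraMap R (Localization q.asIdeal.primeCompl) x ≠ 0 := by
    intro h0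
    exact hq (hxt ▸ (loc_mk'_eq_zero_iff q x t).mpr h0)
  obtain ⟨J, hJs, hrad, hxJ⟩ := detect_primary s hinf hprim q x hx
  refine ⟨⟨J.radical, Ideal.isPrime_radical (hprim J hJs)⟩, J, hJs, rfl, hrad, ?_⟩
  rw [← hσ q _ hrad, ← hxt, ringSpecMap_mk']
  rw [Ne, loc_mk'_eq_zero_iff]
  exact nonzero_at_radical (hprim J hJs) _ rfl hxJ

/-- Crux: a compatible family vanishing at `p₀` vanishes on a basic open set around `p₀`. -/
lemma family_crux [IsNoetherianRing R] (p₀ : PrimeSpectrum R) (h0 : σ p₀ = 0) :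
    ∃ w, w ∉ p₀.asIdeal ∧ ∀ q : PrimeSpectrum R, w ∉ q.asIdeal → σ q = 0 := by
  classical
  obtain ⟨s, hinf, hprim⟩ : ∃ s : Finset (Ideal R), s.inf id = ⊥ ∧ ∀ J ∈ s, J.IsPrimary :=
    Submodule.isLasker (R := R) (M := R) ⊥
  have hchoice : ∀ J : {J // J ∈ s}, ∃ wJ : R,
      (¬ J.1.radical ≤ p₀.asIdeal → wJ ∈ J.1.radical) ∧ wJ ∉ p₀.asIdeal := by
    rintro ⟨J, hJ⟩
    by_cases hle : J.radical ≤ p₀.asIdeal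
    · exact ⟨1, fun h => absurd hle h,
        fun h1 => p₀.isPrime.ne_top (Ideal.eq_top_iff_one _ |>.2 h1)⟩
    · obtain ⟨u, huJ, huq⟩ := SetLike.not_le_iff_exists.mp hle
      exact ⟨u, fun _ => huJ, huq⟩
  choose wf hw1 hw2 using hchoice
  refine ⟨∏ J ∈ s.attach, wf J, fun hmem => ?_, fun q hwq => ?_⟩
  · exact (Submonoid.prod_mem p₀.asIdeal.primeCompl (fun J _ => hw2 J)) hmem
  · by_contra hq0
    obtain ⟨p, J, hJs, hpeq, hple, hpne⟩ := family_detect σ hσ s hinf hprim q hq0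
    have hnle : ¬ J.radical ≤ p₀.asIdeal := by
      intro hle
      exact hpne (by rw [← hσ p₀ p (hpeq ▸ hle), h0, map_zero])
    apply hwq
    have hfac := Finset.mul_prod_erase s.attach wf (Finset.mem_attach s ⟨J, hJs⟩)
    rw [← hfac]
    exact Ideal.mul_mem_right _ _ (hple (hpeq ▸ hw1 ⟨J, hJs⟩ hnle))

/-- Local representation: near any prime the family is given by a single fraction. -/
lemma family_localrep [IsNoetherianRing R] (p₀ : PrimeSpectrum R) :
    ∃ v a t : R, v ∉ p₀.asIdeal ∧ ∀ q : PrimeSpectrum R, v ∉ q.asIdeal →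
      t ∉ q.asIdeal ∧
      algebraMap R (Localization q.asIdeal.primeCompl) t * σ q
        = algebraMap R (Localization q.asIdeal.primeCompl) a := by
  obtain ⟨a, t, hat⟩ := IsLocalization.exists_mk'_eq p₀.asIdeal.primeCompl (σ p₀)
  set τ : ∀ p : PrimeSpectrum R, Localization p.asIdeal.primeCompl :=
    fun p => algebraMap R (Localization p.asIdeal.primeCompl) t.1 * σ p
      - algebraMap R (Localization p.asIdeal.primeCompl) a with hτdef
  have hτ : ∀ (p q : PrimeSpectrum R) (h : q.asIdeal ≤ p.asIdeal),
      ringSpecMap p q h (τ p) = τ q := by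
    intro p q h
    simp only [hτdef, map_sub, map_mul, ringSpecMap_algebraMap, hσ p q h]
  have hτ0 : τ p₀ = 0 := by
    rw [hτdef]
    simp only [← hat]
    rw [IsLocalization.mk'_spec', sub_self]
  obtain ⟨w, hw, hwall⟩ := family_crux τ hτ p₀ hτ0
  refine ⟨w * t.1, a, t.1, ?_, fun q hvq => ?_⟩
  · intro h
    rcases p₀.isPrime.mul_mem_iff_mem_or_mem.mp h with h | h
    · exact hw h
    · exact t.2 h
  · have hwnq : w ∉ q.asIdeal := fun h => hvq (Ideal.mul_mem_right _ _ h)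
    have htnq : t.1 ∉ q.asIdeal := fun h => hvq (Ideal.mul_mem_left _ _ h)
    have := hwall q hwnq
    rw [hτdef] at this
    exact ⟨htnq, sub_eq_zero.mp this⟩

end Family

/-- For a commutative Noetherian ring `R`, the natural ring homomorphism
`R → lim_{p ∈ Spec R} R_p` is a ring isomorphism. -/
theorem ring_iso_limit_localizations [IsNoetherianRing R] :
    Function.Bijective (toRingCompatibleFamilies R) := by
  classical
  constructor
  · rw [injective_iff_map_eq_zero]
    intro r hr
    by_contra hr0
    have hann : (Submodule.span R {r}).annihilator ≠ ⊤ := by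
      intro h
      have h1 : (1 : R) ∈ (Submodule.span R {r}).annihilator := by
        rw [h]; exact Submodule.mem_top
      rw [Submodule.mem_annihilator_span_singleton] at h1
      exact hr0 (by simpa using h1)
    obtain ⟨m, hm, hle⟩ := Ideal.exists_le_maximal _ hann
    have hc : algebraMap R (Localization
        (⟨m, hm.isPrime⟩ : PrimeSpectrum R).asIdeal.primeCompl) r = 0 :=
      congrFun (congrArg Subtype.val hr) ⟨m, hm.isPrime⟩
    rw [IsLocalization.map_eq_zero_iff (⟨m, hm.isPrime⟩ :
      PrimeSpectrum R).asIdeal.primeCompl] at hc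
    obtain ⟨⟨u, hu⟩, hur⟩ := hc
    refine hu (hle ?_)
    rw [Submodule.mem_annihilator_span_singleton]
    simpa [smul_eq_mul] using hur
  · rintro ⟨σ, hσmem⟩
    have hσ : ∀ (p q : PrimeSpectrum R) (h : q.asIdeal ≤ p.asIdeal),
        ringSpecMap p q h (σ p) = σ q := hσmem
    set G : Set R := {v | ∃ a t : R, ∀ q : PrimeSpectrum R, v ∉ q.asIdeal →
        t ∉ q.asIdeal ∧ algebraMap R (Localization q.asIdeal.primeCompl) t * σ q
          = algebraMap R (Localization q.asIdeal.primeCompl) a} with hGdef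
    have hGspan : Ideal.span G = ⊤ := by
      by_contra h
      obtain ⟨m, hm, hle⟩ := Ideal.exists_le_maximal _ h
      obtain ⟨v, a, t, hv, hprop⟩ := family_localrep σ hσ ⟨m, hm.isPrime⟩
      exact hv (hle (Ideal.subset_span ⟨a, t, hprop⟩))
    have h1 : (1 : R) ∈ Ideal.span G := by rw [hGspan]; exact Submodule.mem_top
    obtain ⟨T, hTG, hT1⟩ := Submodule.mem_span_finite_of_mem_span h1
    have hcover : ∀ q : PrimeSpectrum R, ∃ v ∈ T, v ∉ q.asIdeal := by
      intro q
      by_contra hc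
      push_neg at hc
      have hsub : Ideal.span (↑T : Set R) ≤ q.asIdeal :=
        Ideal.span_le.mpr (fun v hv => hc v hv)
      exact q.isPrime.ne_top (Ideal.eq_top_iff_one _ |>.2 (hsub hT1))
    have hTw : ∀ v : {v // v ∈ T}, ∃ a t : R, ∀ q : PrimeSpectrum R, v.1 ∉ q.asIdeal →
        t ∉ q.asIdeal ∧ algebraMap R (Localization q.asIdeal.primeCompl) t * σ q
          = algebraMap R (Localization q.asIdeal.primeCompl) a := fun v => hTG v.2
    choose A t hAt using hTw
    have pair : ∀ v v' : {v // v ∈ T}, ∃ n : ℕ,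
        (v.1 * v'.1) ^ n * (A v * t v' - A v' * t v) = 0 := by
      intro v v'
      have hrad : v.1 * v'.1 ∈
          (Submodule.span R {A v * t v' - A v' * t v}).annihilator.radical := by
        rw [Ideal.radical_eq_sInf]
        refine Submodule.mem_sInf.mpr ?_
        rintro P ⟨hPann, hPprime⟩
        by_contra hvP
        have hv : v.1 ∉ P := fun h => hvP (Ideal.mul_mem_right _ _ h)
        have hv' : v'.1 ∉ P := fun h => hvP (Ideal.mul_mem_left _ _ h)
        obtain ⟨ht, heq⟩ := hAt v ⟨P, hPprime⟩ hv
        obtain ⟨ht', heq'⟩ := hAt v' ⟨P, hPprime⟩ hv'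
        have hx0 : algebraMap R (Localization
            (⟨P, hPprime⟩ : PrimeSpectrum R).asIdeal.primeCompl)
            (A v * t v' - A v' * t v) = 0 := by
          rw [map_sub, map_mul, map_mul, ← heq, ← heq']
          ring
        rw [IsLocalization.map_eq_zero_iff
          (⟨P, hPprime⟩ : PrimeSpectrum R).asIdeal.primeCompl] at hx0
        obtain ⟨⟨u, hu⟩, hux⟩ := hx0
        refine hu (hPann ?_)
        rw [Submodule.mem_annihilator_span_singleton]
        simpa [smul_eq_mul] using hux
      rw [Ideal.mem_radical_iff] at hrad
      obtain ⟨n, hn⟩ := hrad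
      rw [Submodule.mem_annihilator_span_singleton] at hn
      exact ⟨n, by simpa [smul_eq_mul] using hn⟩
    choose n hn using pair
    set N : ℕ := T.attach.sup (fun v => T.attach.sup (fun v' => n v v')) with hNdef
    have hNb : ∀ v v', n v v' ≤ N := by
      intro v v'
      rw [hNdef]
      exact le_trans (Finset.le_sup (Finset.mem_attach _ v'))
        (Finset.le_sup (f := fun v => T.attach.sup (fun v' => n v v'))
          (Finset.mem_attach _ v))
    have hnN : ∀ v v' : {v // v ∈ T}, (v.1 * v'.1) ^ N * (A v * t v' - A v' * t v) = 0 := by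
      intro v v'
      have h := hn v v'
      have hNeq : N = (N - n v v') + n v v' := (Nat.sub_add_cancel (hNb v v')).symm
      rw [hNeq, pow_add, mul_assoc, h, mul_zero]
    set b : {v // v ∈ T} → R := fun v => v.1 ^ (N + 1) * A v with hbdef
    set c : {v // v ∈ T} → R := fun v => v.1 ^ (N + 1) * t v with hcdef
    have hbc : ∀ v v', c v * b v' = c v' * b v := by
      intro v v'
      have h := hnN v v'
      simp only [hbdef, hcdef]
      linear_combination (-(v.1 * v'.1)) * h
    have hccover : ∀ q : PrimeSpectrum R, ∃ v : {v // v ∈ T},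
        v.1 ∉ q.asIdeal ∧ c v ∉ q.asIdeal := by
      intro q
      obtain ⟨v, hvT, hv⟩ := hcover q
      obtain ⟨ht, -⟩ := hAt ⟨v, hvT⟩ q hv
      refine ⟨⟨v, hvT⟩, hv, fun h => ?_⟩
      rcases q.isPrime.mul_mem_iff_mem_or_mem.mp h with h | h
      · exact hv (q.isPrime.mem_of_pow_mem _ h)
      · exact ht h
    have hcspan : (1 : R) ∈ Ideal.span (Set.range c) := by
      have htop : Ideal.span (Set.range c) = ⊤ := by
        by_contra h
        obtain ⟨m, hm, hle⟩ := Ideal.exists_le_maximal _ h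
        obtain ⟨v, -, hv⟩ := hccover ⟨m, hm.isPrime⟩
        exact hv (hle (Ideal.subset_span ⟨v, rfl⟩))
      rw [htop]; exact Submodule.mem_top
    obtain ⟨d, hd⟩ := Finsupp.mem_span_range_iff_exists_finsupp.mp hcspan
    set r : R := d.sum fun i e => e * b i with hrdef
    refine ⟨r, Subtype.ext (funext fun q => ?_)⟩
    show algebraMap R (Localization q.asIdeal.primeCompl) r = σ q
    obtain ⟨v, hv, hcq⟩ := hccover q
    obtain ⟨htq, heq⟩ := hAt v q hv
    have hkey : c v * r = b v := by
      rw [hrdef, Finsupp.mul_sum]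
      have hterm : ∀ i e, c v * (e * b i) = (e * c i) * b v := by
        intro i e
        rw [show c v * (e * b i) = e * (c v * b i) by ring, hbc v i]
        ring
      have step1 : (d.sum fun i e => c v * (e * b i))
          = d.sum fun i e => (e * c i) * b v := by
        simp only [Finsupp.sum]
        exact Finset.sum_congr rfl fun i _ => hterm i (d i)
      rw [step1, ← Finsupp.sum_mul]
      have hone : (d.sum fun i e => e * c i) = 1 := by
        simpa [smul_eq_mul] using hd
      rw [hone, one_mul]
    have hu : IsUnit (algebraMap R (Localization q.asIdeal.primeCompl) (c v)) :=
      IsLocalization.map_units _ (⟨c v, hcq⟩ : q.asIdeal.primeCompl)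
    have h2 : algebraMap R (Localization q.asIdeal.primeCompl) (c v) *
        algebraMap R (Localization q.asIdeal.primeCompl) r
        = algebraMap R (Localization q.asIdeal.primeCompl) (b v) := by
      rw [← map_mul, hkey]
    have h3 : algebraMap R (Localization q.asIdeal.primeCompl) (c v) * σ q
        = algebraMap R (Localization q.asIdeal.primeCompl) (b v) := by
      rw [hcdef, hbdef]
      simp only [map_mul]
      rw [mul_assoc, heq]
    exact hu.mul_left_cancel (h2.trans h3.symm)
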